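/- arXiv:1305.2303 — 3 statements merged into one kernel-verified Lean document; each statement's English description precedes it below -/
import Mathlib

section
/- Let B ∈ C²((0,∞)) satisfy B, B', B'' > 0 on (0,∞), and let H ∈ C²(ℝⁿ \ {0}) be positively homogeneous of degree 1 with H > 0 on ℝⁿ \ {0}. Then the Hessian of B ∘ H is positive definite at every ξ ≠ 0 if and only if for every ξ ∈ Sⁿ⁻¹ the restriction of Hess H(ξ) to the orthogonal complement ξ^⊥ is positive definite (as a quadratic form on ξ^⊥). -/
open scoped RealInnerProductSpace
open Filter Topology

/-!
Euler's relations for the `1`-homogeneous `H` give `DH(ξ) ξ = H(ξ) > 0` and `D²H(ξ) ξ = 0`, so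
`D²(B ∘ H)(ξ)[ζ, ζ] = B''(H ξ) (DH(ξ) ζ)² + B'(H ξ) D²H(ξ)[V, V]` whenever `ζ - V ∈ ℝ ξ`.
Taking `V ⊥ ξ` gives positivity from the condition on `ξ^⊥` (if `V = 0`, then `DH(ξ) ζ` is a
nonzero multiple of `H ξ`); conversely, sliding `V ⊥ ξ` along `ξ` until `DH(ξ) ζ = 0` isolates
the second term. As `D²H` is homogeneous of degree `-1`, the condition at unit vectors gives
it at every `ξ ≠ 0`.
-/

section Calculus

variable {E F : Type*} [NormedAddCommGroup E] [NormedSpace ℝ E]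
  [NormedAddCommGroup F] [NormedSpace ℝ F]

theorem hasFDerivAt_fderiv_apply {f : E → F} {x : E} (hf : DifferentiableAt ℝ (fderiv ℝ f) x)
    (v : E) : HasFDerivAt (fun y => fderiv ℝ f y v) ((fderiv ℝ (fderiv ℝ f) x).flip v) x :=
  (hf.hasFDerivAt.clm_apply (hasFDerivAt_const v x)).congr_fderiv (by ext; simp)

theorem fderiv_fderiv_comp_apply {B : ℝ → ℝ} {H : E → ℝ} {ξ : E}
    (hB : ContDiffAt ℝ 2 B (H ξ)) (hH : ContDiffAt ℝ 2 H ξ) (ζ : E) :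
    fderiv ℝ (fun x => fderiv ℝ (fun y => B (H y)) x ζ) ξ ζ =
      deriv (deriv B) (H ξ) * fderiv ℝ H ξ ζ ^ 2
        + deriv B (H ξ) * fderiv ℝ (fderiv ℝ H) ξ ζ ζ := by
  have hBd : ∀ᶠ x in 𝓝 ξ, DifferentiableAt ℝ B (H x) :=
    hH.continuousAt.eventually ((hB.eventually (by simp)).mono fun _ hs =>
      hs.differentiableAt (by norm_num))
  have hHd : ∀ᶠ x in 𝓝 ξ, DifferentiableAt ℝ H x :=
    (hH.eventually (by simp)).mono fun _ hx => hx.differentiableAt (by norm_num)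
  have hchain : (fun x => fderiv ℝ (fun y => B (H y)) x ζ) =ᶠ[𝓝 ξ]
      fun x => deriv B (H x) * fderiv ℝ H x ζ := by
    filter_upwards [hBd, hHd] with x hBx hHx
    rw [show (fun y => B (H y)) = B ∘ H from rfl,
      (hBx.hasDerivAt.comp_hasFDerivAt x hHx.hasFDerivAt).fderiv]
    simp
  have hB' : HasFDerivAt (fun x => deriv B (H x))
      (deriv (deriv B) (H ξ) • fderiv ℝ H ξ) ξ :=
    ((hB.derivWithin (m := 1) le_rfl).differentiableAt one_ne_zero).hasDerivAt.comp_hasFDerivAt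
      ξ (hH.differentiableAt (by norm_num)).hasFDerivAt
  have hDH := (hH.fderiv_right (m := 1) le_rfl).differentiableAt one_ne_zero
  rw [hchain.fderiv_eq, (hB'.fun_mul (hasFDerivAt_fderiv_apply hDH ζ)).fderiv]
  simp only [add_apply, smul_apply, ContinuousLinearMap.flip_apply, smul_eq_mul]
  ring

theorem fderiv_apply_self_eq_smul_of_homogeneous {g : E → F} {x : E} {k : ℕ}
    (hg : DifferentiableAt ℝ g x) (hhom : ∀ᶠ t in 𝓝 (1 : ℝ), g (t • x) = t ^ k • g x) :
    fderiv ℝ g x x = (k : ℝ) • g x := by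
  have hline : HasDerivAt (fun t : ℝ => t • x) x 1 := by
    simpa using (hasDerivAt_id (1 : ℝ)).smul_const x
  have h₁ : HasDerivAt (fun t : ℝ => g (t • x)) (fderiv ℝ g x x) 1 :=
    hg.hasFDerivAt.comp_hasDerivAt_of_eq 1 hline (one_smul ℝ x).symm
  have h₂ : HasDerivAt (fun t : ℝ => t ^ k • g x) ((k : ℝ) • g x) 1 := by
    simpa using (hasDerivAt_pow k (1 : ℝ)).smul_const (g x)
  exact h₁.unique (h₂.congr_of_eventuallyEq hhom)

theorem fderiv_smul_of_comp_smul {g : E → F} {x : E} {t c : ℝ} (ht : t ≠ 0)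
    (h : (fun y => g (t • y)) =ᶠ[𝓝 x] fun y => c • g y) :
    fderiv ℝ g (t • x) = (c / t) • fderiv ℝ g x := by
  have h' : fderiv ℝ (fun y => g (t • y)) x = fderiv ℝ (fun y => c • g y) x := h.fderiv_eq
  rw [fderiv_comp_smul t, show (fun y => c • g y) = (c • g : E → F) from rfl,
    fderiv_const_smul_field c, Pi.smul_apply] at h'
  rw [div_eq_inv_mul, mul_smul, ← h', inv_smul_smul₀ ht]

end Calculus

section Homogeneous

variable {E : Type*} [NormedAddCommGroup E] [NormedSpace ℝ E] {H : E → ℝ}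
  (hhom : ∀ t : ℝ, 0 < t → ∀ ξ : E, ξ ≠ 0 → H (t • ξ) = t * H ξ)
include hhom

theorem fderiv_smul_eq_of_homogeneous {t : ℝ} (ht : 0 < t) {ξ : E} (hξ : ξ ≠ 0) :
    fderiv ℝ H (t • ξ) = fderiv ℝ H ξ := by
  have h : (fun y => H (t • y)) =ᶠ[𝓝 ξ] fun y => t • H y := by
    filter_upwards [isOpen_ne.mem_nhds hξ] with y hy using hhom t ht y hy
  simpa [ht.ne'] using fderiv_smul_of_comp_smul ht.ne' h

theorem fderiv_fderiv_smul_eq_of_homogeneous {t : ℝ} (ht : 0 < t) {ξ : E} (hξ : ξ ≠ 0) :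
    fderiv ℝ (fderiv ℝ H) (t • ξ) = t⁻¹ • fderiv ℝ (fderiv ℝ H) ξ := by
  have h : (fun y => fderiv ℝ H (t • y)) =ᶠ[𝓝 ξ] fun y => (1 : ℝ) • fderiv ℝ H y := by
    filter_upwards [isOpen_ne.mem_nhds hξ] with y hy
    rw [one_smul, fderiv_smul_eq_of_homogeneous hhom ht hy]
  simpa using fderiv_smul_of_comp_smul (g := fderiv ℝ H) (c := 1) ht.ne' h

theorem fderiv_apply_self_eq_of_homogeneous {ξ : E} (hξ : ξ ≠ 0)
    (hH : DifferentiableAt ℝ H ξ) : fderiv ℝ H ξ ξ = H ξ := by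
  have h : ∀ᶠ t in 𝓝 (1 : ℝ), H (t • ξ) = t ^ 1 • H ξ := by
    filter_upwards [Ioi_mem_nhds one_pos] with t ht using by simpa using hhom t ht ξ hξ
  simpa using fderiv_apply_self_eq_smul_of_homogeneous hH h

theorem fderiv_fderiv_apply_self_eq_zero_of_homogeneous {ξ : E} (hξ : ξ ≠ 0)
    (hH : DifferentiableAt ℝ (fderiv ℝ H) ξ) : fderiv ℝ (fderiv ℝ H) ξ ξ = 0 := by
  have h : ∀ᶠ t in 𝓝 (1 : ℝ), fderiv ℝ H (t • ξ) = t ^ 0 • fderiv ℝ H ξ := by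
    filter_upwards [Ioi_mem_nhds one_pos] with t ht
    rw [pow_zero, one_smul, fderiv_smul_eq_of_homogeneous hhom ht hξ]
  simpa using fderiv_apply_self_eq_smul_of_homogeneous hH h

end Homogeneous

section QuadraticForm

variable {F : Type*} [NormedAddCommGroup F] [InnerProductSpace ℝ F]
  {Q : F →L[ℝ] F →L[ℝ] ℝ} {ξ : F}

theorem apply_add_smul_apply_add_smul (hQ : Q ξ = 0) (hQsymm : ∀ v w, Q v w = Q w v)
    (v : F) (a : ℝ) : Q (v + a • ξ) (v + a • ξ) = Q v v := by
  simp [hQ, hQsymm v ξ]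

theorem forall_pos_sq_add_iff_forall_pos_orthogonal {ℓ : F →L[ℝ] ℝ} {b₁ b₂ : ℝ}
    (hQ : Q ξ = 0) (hQsymm : ∀ v w, Q v w = Q w v) (hℓ : ℓ ξ ≠ 0)
    (hb₁ : 0 < b₁) (hb₂ : 0 < b₂) :
    (∀ ζ, ζ ≠ 0 → 0 < b₂ * ℓ ζ ^ 2 + b₁ * Q ζ ζ) ↔
      ∀ V, ⟪V, ξ⟫ = 0 → V ≠ 0 → 0 < Q V V := by
  constructor
  · intro h V hV hV0
    set ζ := V + (-(ℓ V / ℓ ξ)) • ξ with hζ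
    have hℓζ : ℓ ζ = 0 := by
      rw [hζ, map_add, map_smul, smul_eq_mul]; field_simp; ring
    have hinner : ⟪ζ, V⟫ = ‖V‖ ^ 2 := by
      rw [hζ, inner_add_left, real_inner_smul_left, real_inner_comm V ξ, hV,
        real_inner_self_eq_norm_sq]; ring
    have hζ0 : ζ ≠ 0 := fun h0 => hV0 (by simpa [h0, eq_comm] using hinner)
    have := h ζ hζ0
    rw [hℓζ, hζ, apply_add_smul_apply_add_smul hQ hQsymm] at this
    exact pos_of_mul_pos_right (by simpa using this) hb₁.le
  · intro h ζ hζ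
    have hξ : ξ ≠ 0 := fun h0 => hℓ (by simp [h0])
    set a := ⟪ζ, ξ⟫ / ‖ξ‖ ^ 2 with ha
    set V := ζ - a • ξ with hVdef
    have hV : ⟪V, ξ⟫ = 0 := by
      rw [hVdef, inner_sub_left, real_inner_smul_left, real_inner_self_eq_norm_sq, ha,
        div_mul_cancel₀ _ (by positivity), sub_self]
    have hζV : ζ = V + a • ξ := by rw [hVdef, sub_add_cancel]
    rw [hζV, apply_add_smul_apply_add_smul hQ hQsymm]
    by_cases hV0 : V = 0
    · have ha₀ : a ≠ 0 := fun ha₀ => hζ (by simp [hζV, hV0, ha₀])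
      have : 0 < ℓ (V + a • ξ) ^ 2 := by
        simpa [hV0] using sq_pos_of_ne_zero (mul_ne_zero ha₀ hℓ)
      simp only [hV0, map_zero, mul_zero, add_zero] at this ⊢
      positivity
    · have := h V hV hV0
      positivity

end QuadraticForm

/-- Characterization of positive definiteness of `Hess (B ∘ H)`: it is positive
definite at every `ξ ≠ 0` iff the restriction of `Hess H(ξ)` to `ξ^⊥` is positive
definite for every unit vector `ξ`. -/
theorem hess_comp_posdef_iff
    (n : ℕ) (H : EuclideanSpace ℝ (Fin n) → ℝ) (B : ℝ → ℝ)
    (hB : ContDiffOn ℝ 2 B (Set.Ioi 0))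
    (hBpos : ∀ t : ℝ, 0 < t → 0 < B t ∧ 0 < deriv B t ∧ 0 < deriv (deriv B) t)
    (hH : ContDiffOn ℝ 2 H {x : EuclideanSpace ℝ (Fin n) | x ≠ 0})
    (hhom : ∀ t : ℝ, 0 < t → ∀ ξ : EuclideanSpace ℝ (Fin n), ξ ≠ 0 →
      H (t • ξ) = t * H ξ)
    (hHpos : ∀ ξ : EuclideanSpace ℝ (Fin n), ξ ≠ 0 → 0 < H ξ) :
    (∀ ξ : EuclideanSpace ℝ (Fin n), ξ ≠ 0 →
        ∀ ζ : EuclideanSpace ℝ (Fin n), ζ ≠ 0 →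
          0 < fderiv ℝ (fun x => fderiv ℝ (fun y => B (H y)) x ζ) ξ ζ) ↔
      (∀ ξ : EuclideanSpace ℝ (Fin n), ‖ξ‖ = 1 →
        ∀ V : EuclideanSpace ℝ (Fin n), ⟪V, ξ⟫ = 0 → V ≠ 0 →
          0 < fderiv ℝ (fun x => fderiv ℝ H x V) ξ V) := by
  have hHξ {ξ : EuclideanSpace ℝ (Fin n)} (hξ : ξ ≠ 0) : ContDiffAt ℝ 2 H ξ :=
    hH.contDiffAt (isOpen_ne.mem_nhds hξ)
  have hDH {ξ : EuclideanSpace ℝ (Fin n)} (hξ : ξ ≠ 0) : DifferentiableAt ℝ (fderiv ℝ H) ξ :=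
    ((hHξ hξ).fderiv_right (m := 1) le_rfl).differentiableAt one_ne_zero
  have pointwise {ξ : EuclideanSpace ℝ (Fin n)} (hξ : ξ ≠ 0) :
      (∀ ζ, ζ ≠ 0 → 0 < fderiv ℝ (fun x => fderiv ℝ (fun y => B (H y)) x ζ) ξ ζ) ↔
        ∀ V, ⟪V, ξ⟫ = 0 → V ≠ 0 → 0 < fderiv ℝ (fderiv ℝ H) ξ V V := by
    obtain ⟨-, hB₁, hB₂⟩ := hBpos (H ξ) (hHpos ξ hξ)
    simp only [fderiv_fderiv_comp_apply (hB.contDiffAt (Ioi_mem_nhds (hHpos ξ hξ))) (hHξ hξ)]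
    refine forall_pos_sq_add_iff_forall_pos_orthogonal ?_
      ((hHξ hξ).isSymmSndFDerivAt (by simp)) ?_ hB₁ hB₂
    · exact fderiv_fderiv_apply_self_eq_zero_of_homogeneous hhom hξ (hDH hξ)
    · rw [fderiv_apply_self_eq_of_homogeneous hhom hξ ((hHξ hξ).differentiableAt two_ne_zero)]
      exact (hHpos ξ hξ).ne'
  constructor
  · intro h ξ hξ₁ V hV hV₀
    have hξ : ξ ≠ 0 := ne_zero_of_norm_ne_zero (by simp [hξ₁])
    rw [(hasFDerivAt_fderiv_apply (hDH hξ) V).fderiv]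
    exact (pointwise hξ).1 (h ξ hξ) V hV hV₀
  · intro h ξ hξ
    refine (pointwise hξ).2 fun V hV hV₀ => ?_
    have hr : 0 < ‖ξ‖ := norm_pos_iff.mpr hξ
    set u := ‖ξ‖⁻¹ • ξ
    have hu : u ≠ 0 := smul_ne_zero (inv_ne_zero hr.ne') hξ
    have hVu : ⟪V, u⟫ = 0 := by simp [u, real_inner_smul_right, hV]
    have hpos := h u (norm_smul_inv_norm hξ) V hVu hV₀
    rw [(hasFDerivAt_fderiv_apply (hDH hu) V).fderiv] at hpos
    rw [← smul_inv_smul₀ hr.ne' ξ, fderiv_fderiv_smul_eq_of_homogeneous hhom hr hu]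
    simpa using mul_pos (inv_pos.mpr hr) hpos
end

section
/- Let B ∈ C²((0,∞)) with B, B', B'' > 0 on (0,∞), and H ∈ C²(ℝⁿ \ {0}) positively homogeneous of degree 1 with H > 0 away from 0. If Hess(B ∘ H) is positive definite on ℝⁿ \ {0}, then Hess H(ξ) is positive semidefinite for every ξ ≠ 0, i.e. ∑ᵢⱼ Hᵢⱼ(ξ) ηᵢ ηⱼ ≥ 0 for all η ∈ ℝⁿ. -/
/-!
Differentiating Euler's identity `DH(y) y = H(y)` at `ξ` shows that `ξ` lies in the kernel of the
symmetric form `D²H(ξ)`. Hence `D²H(ξ)(η, η) = D²H(ξ)(w, w)`, where `w = η - (DH(ξ) η / H(ξ)) ξ`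
satisfies `DH(ξ) w = 0`. For such `w` the chain rule gives
`D²(B ∘ H)(ξ)(w, w) = B'(H ξ) · D²H(ξ)(w, w)`, and `B' > 0` transfers the positivity.
-/

open Filter Topology

theorem ContinuousLinearMap.apply_add_smul_apply_add_smul_of_apply_eq_zero
    {𝕜 E F : Type*} [NontriviallyNormedField 𝕜] [NormedAddCommGroup E] [NormedSpace 𝕜 E]
    [NormedAddCommGroup F] [NormedSpace 𝕜 F] {Q : E →L[𝕜] E →L[𝕜] F} {x : E}
    (hsymm : ∀ v w, Q v w = Q w v) (hx : ∀ v, Q v x = 0) (w : E) (c : 𝕜) :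
    Q (w + c • x) (w + c • x) = Q w w := by
  simp only [map_add, map_smul, add_apply, smul_apply, hx, hsymm x, smul_zero, add_zero]

section

variable {E : Type*} [NormedAddCommGroup E] [NormedSpace ℝ E]

section

variable {F : Type*} [NormedAddCommGroup F] [NormedSpace ℝ F] {f : E → F} {x : E}

theorem fderiv_apply_self_of_homogeneous (hf : DifferentiableAt ℝ f x)
    (hhom : ∀ t : ℝ, 0 < t → f (t • x) = t • f x) : fderiv ℝ f x x = f x := by
  have hray : HasDerivAt (fun t : ℝ => t • x) x 1 := by
    simpa using (hasDerivAt_id (1 : ℝ)).smul_const x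
  have hcomp : HasDerivAt (fun t : ℝ => f (t • x)) (fderiv ℝ f x x) 1 :=
    hf.hasFDerivAt.comp_hasDerivAt_of_eq 1 hray (one_smul ℝ x).symm
  have hlin : HasDerivAt (fun t : ℝ => t • f x) (f x) 1 := by
    simpa using (hasDerivAt_id (1 : ℝ)).smul_const (f x)
  have heq : (fun t : ℝ => f (t • x)) =ᶠ[𝓝 1] fun t => t • f x := by
    filter_upwards [Ioi_mem_nhds one_pos] with t ht
    exact hhom t ht
  exact (hcomp.congr_of_eventuallyEq heq.symm).unique hlin

theorem fderiv_fun_fderiv_apply (hf : DifferentiableAt ℝ (fderiv ℝ f) x) (v w : E) :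
    fderiv ℝ (fun y => fderiv ℝ f y w) x v = fderiv ℝ (fderiv ℝ f) x v w := by
  simp [fderiv_clm_apply hf (differentiableAt_const w)]

theorem fderiv_fderiv_apply_eq_zero_of_euler (hf : DifferentiableAt ℝ (fderiv ℝ f) x)
    (heuler : (fun y => fderiv ℝ f y y) =ᶠ[𝓝 x] f) (v : E) :
    fderiv ℝ (fderiv ℝ f) x v x = 0 := by
  have h := congrArg (fun L : E →L[ℝ] F => L v) <|
    heuler.fderiv_eq.symm.trans (fderiv_clm_apply hf differentiableAt_fun_id)
  simpa using h

end

theorem fderiv_fderiv_comp_apply_s7 {g : ℝ → ℝ} {f : E → ℝ} {x : E}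
    (hg : ∀ᶠ y in 𝓝 x, DifferentiableAt ℝ g (f y)) (hf : ∀ᶠ y in 𝓝 x, DifferentiableAt ℝ f y)
    (hg' : DifferentiableAt ℝ (deriv g) (f x)) (hf' : DifferentiableAt ℝ (fderiv ℝ f) x)
    (w : E) :
    fderiv ℝ (fun y => fderiv ℝ (fun z => g (f z)) y w) x w =
      deriv (deriv g) (f x) * fderiv ℝ f x w ^ 2 +
        deriv g (f x) * fderiv ℝ (fderiv ℝ f) x w w := by
  have hchain : (fun y => fderiv ℝ (fun z => g (f z)) y w) =ᶠ[𝓝 x]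
      fun y => deriv g (f y) * fderiv ℝ f y w := by
    filter_upwards [hg, hf] with y hgy hfy
    rw [show (fun z => g (f z)) = g ∘ f from rfl,
      (hgy.hasDerivAt.comp_hasFDerivAt y hfy.hasFDerivAt).fderiv]
    rfl
  have hg'' : HasFDerivAt (fun y => deriv g (f y)) (deriv (deriv g) (f x) • fderiv ℝ f x) x :=
    hg'.hasDerivAt.comp_hasFDerivAt x hf.self_of_nhds.hasFDerivAt
  rw [hchain.fderiv_eq, fderiv_fun_mul hg''.differentiableAt
    (hf'.clm_apply (differentiableAt_const w)), hg''.fderiv]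
  simp only [add_apply, smul_apply, smul_eq_mul, fderiv_fun_fderiv_apply hf']
  ring

theorem exists_fderiv_apply_eq_zero_and_fderiv_fderiv_apply_eq_of_euler {f : E → ℝ} {x : E}
    (hf : ContDiffAt ℝ 2 f x) (hfx : f x ≠ 0) (heuler : (fun y => fderiv ℝ f y y) =ᶠ[𝓝 x] f)
    (η : E) :
    ∃ w, fderiv ℝ f x w = 0 ∧
      fderiv ℝ (fderiv ℝ f) x η η = fderiv ℝ (fderiv ℝ f) x w w := by
  set c := fderiv ℝ f x η / f x
  refine ⟨η - c • x, ?_, ?_⟩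
  · have hxx : fderiv ℝ f x x = f x := heuler.self_of_nhds
    rw [map_sub, map_smul, hxx, smul_eq_mul, div_mul_cancel₀ _ hfx, sub_self]
  · have hd2f : DifferentiableAt ℝ (fderiv ℝ f) x :=
      (hf.fderiv_right one_add_one_eq_two.le).differentiableAt one_ne_zero
    conv_lhs => rw [← sub_add_cancel η (c • x)]
    exact ContinuousLinearMap.apply_add_smul_apply_add_smul_of_apply_eq_zero
      (hf.isSymmSndFDerivAt (by simp)) (fderiv_fderiv_apply_eq_zero_of_euler hd2f heuler) _ _
end

/-- If `Hess (B ∘ H)` is positive definite on `ℝⁿ \ {0}`, then `Hess H(ξ)` is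
positive semidefinite for every `ξ ≠ 0`. -/
theorem hess_H_posSemidef
    (n : ℕ) (H : EuclideanSpace ℝ (Fin n) → ℝ) (B : ℝ → ℝ)
    (hB : ContDiffOn ℝ 2 B (Set.Ioi 0))
    (hBpos : ∀ t : ℝ, 0 < t → 0 < B t ∧ 0 < deriv B t ∧ 0 < deriv (deriv B) t)
    (hH : ContDiffOn ℝ 2 H {x : EuclideanSpace ℝ (Fin n) | x ≠ 0})
    (hhom : ∀ t : ℝ, 0 < t → ∀ ξ : EuclideanSpace ℝ (Fin n), ξ ≠ 0 →
      H (t • ξ) = t * H ξ)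
    (hHpos : ∀ ξ : EuclideanSpace ℝ (Fin n), ξ ≠ 0 → 0 < H ξ)
    (hposdef : ∀ ξ : EuclideanSpace ℝ (Fin n), ξ ≠ 0 →
      ∀ ζ : EuclideanSpace ℝ (Fin n), ζ ≠ 0 →
        0 < fderiv ℝ (fun x => fderiv ℝ (fun y => B (H y)) x ζ) ξ ζ) :
    ∀ ξ : EuclideanSpace ℝ (Fin n), ξ ≠ 0 →
      ∀ η : EuclideanSpace ℝ (Fin n),
        0 ≤ fderiv ℝ (fun x => fderiv ℝ H x η) ξ η := by
  intro ξ hξ η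
  have hnear : ∀ᶠ x in 𝓝 ξ, x ≠ 0 := isOpen_compl_singleton.mem_nhds hξ
  have hH2 : ∀ᶠ x in 𝓝 ξ, ContDiffAt ℝ 2 H x := by
    filter_upwards [hnear] with x hx
    exact hH.contDiffAt (isOpen_compl_singleton.mem_nhds hx)
  have hdH : ∀ᶠ x in 𝓝 ξ, DifferentiableAt ℝ H x :=
    hH2.mono fun x hx => hx.differentiableAt two_ne_zero
  have hd2H : DifferentiableAt ℝ (fderiv ℝ H) ξ :=
    (hH2.self_of_nhds.fderiv_right one_add_one_eq_two.le).differentiableAt one_ne_zero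
  have heuler : (fun x => fderiv ℝ H x x) =ᶠ[𝓝 ξ] H := by
    filter_upwards [hnear, hdH] with x hx hdx
    exact fderiv_apply_self_of_homogeneous hdx fun t ht => hhom t ht x hx
  obtain ⟨w, hw, hHess⟩ := exists_fderiv_apply_eq_zero_and_fderiv_fderiv_apply_eq_of_euler
    hH2.self_of_nhds (hHpos ξ hξ).ne' heuler η
  rw [fderiv_fun_fderiv_apply hd2H, hHess]
  rcases eq_or_ne w 0 with rfl | hw0
  · simp
  have hdB : ∀ t, 0 < t → DifferentiableAt ℝ B t := fun t ht =>
    (hB.contDiffAt (Ioi_mem_nhds ht)).differentiableAt two_ne_zero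
  have hd2B : DifferentiableAt ℝ (deriv B) (H ξ) :=
    ((hB.deriv_of_isOpen isOpen_Ioi one_add_one_eq_two.le).contDiffAt
      (Ioi_mem_nhds (hHpos ξ hξ))).differentiableAt one_ne_zero
  have hconvex := hposdef ξ hξ w hw0
  rw [fderiv_fderiv_comp_apply_s7 (by filter_upwards [hnear] with x hx using hdB _ (hHpos x hx))
    hdH hd2B hd2H, hw, zero_pow two_ne_zero, mul_zero, zero_add] at hconvex
  exact (pos_of_mul_pos_right hconvex (hBpos _ (hHpos ξ hξ)).2.1.le).le
end

section
/- Let H ∈ C²(ℝⁿ \ {0}) be positively homogeneous of degree 1 with H > 0 away from 0, and B ∈ C¹([0,∞)) ∩ C²((0,∞)) with B(0) = B'(0) = 0. If the pure second derivative ∂²(B∘H)/∂ξ₁² extends continuously to 0, then B is C² up to 0 and B''(0) = H(e₁)⁻² · ∂²(B∘H)/∂ξ₁²(0). -/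
/-!
Along the ray `t ↦ t • v` (here `v = e₁`) homogeneity gives `B (H (t • v)) = B (H v * t)`, so the second
directional derivative of `B ∘ H` at `t • v` is `H v ^ 2 * B'' (H v * t)`. Letting `t → 0⁺`,
`B''` has the limit `H v ^ (-2) * L` at `0⁺`. A function continuous on `[0, ∞)` whose derivative
has a limit at `0⁺` is right-differentiable at `0` with that derivative (mean value theorem);
applied to `B'` this makes `B` a `C²` function on `[0, ∞)`.
-/

open Set Filter Topology

theorem tendsto_comp_mul_left_nhdsGT_zero_iff {α : Type*} {φ : ℝ → α} {l : Filter α} {a : ℝ}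
    (ha : 0 < a) : Tendsto (fun t => φ (a * t)) (𝓝[>] 0) l ↔ Tendsto φ (𝓝[>] 0) l := by
  have hsurj : Function.Surjective (a * ·) := fun y => ⟨y / a, mul_div_cancel₀ y ha.ne'⟩
  have hmap : map (a * ·) (𝓝[>] 0) = 𝓝[>] 0 := by
    conv_lhs => rw [← comap_mulLeft_nhdsGT_zero ha]
    exact map_comap_of_surjective hsurj _
  exact tendsto_map'_iff.symm.trans (by rw [hmap])

section OneSided

variable {g : ℝ → ℝ} {a M : ℝ}

theorem derivWithin_Ici_eqOn_deriv : EqOn (derivWithin g (Ici a)) (deriv g) (Ioi a) :=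
  fun _ hx => derivWithin_of_mem_nhds (mem_of_superset (Ioi_mem_nhds hx) Ioi_subset_Ici_self)

theorem contDiffOn_one_Ici_of_tendsto_deriv (hcont : ContinuousOn g (Ici a))
    (hg : ContDiffOn ℝ 1 g (Ioi a)) (hlim : Tendsto (deriv g) (𝓝[>] a) (𝓝 M)) :
    ContDiffOn ℝ 1 g (Ici a) ∧ derivWithin g (Ici a) a = M := by
  have hdiff : DifferentiableOn ℝ g (Ioi a) := hg.differentiableOn one_ne_zero
  have hderiv : HasDerivWithinAt g M (Ici a) a :=
    hasDerivWithinAt_Ici_of_tendsto_deriv hdiff ((hcont a self_mem_Ici).mono Ioi_subset_Ici_self)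
      self_mem_nhdsWithin hlim
  have hval : derivWithin g (Ici a) a = M := hderiv.derivWithin (uniqueDiffOn_Ici a a self_mem_Ici)
  refine ⟨(contDiffOn_one_iff_derivWithin (uniqueDiffOn_Ici a)).2 ⟨?_, ?_⟩, hval⟩
  · intro x hx
    rcases (mem_Ici.mp hx).eq_or_lt with rfl | hx
    · exact hderiv.differentiableWithinAt
    · exact (hdiff.differentiableAt (Ioi_mem_nhds hx)).differentiableWithinAt
  · intro x hx
    rcases (mem_Ici.mp hx).eq_or_lt with rfl | hx
    · rw [← continuousWithinAt_Ioi_iff_Ici, ContinuousWithinAt, hval]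
      exact hlim.congr' (eventuallyEq_nhdsWithin_of_eqOn derivWithin_Ici_eqOn_deriv).symm
    · have hcontAt : ContinuousAt (deriv g) x :=
        (hg.continuousOn_deriv_of_isOpen isOpen_Ioi le_rfl).continuousAt (Ioi_mem_nhds hx)
      refine (hcontAt.congr ?_).continuousWithinAt
      filter_upwards [Ioi_mem_nhds hx] with y hy
      exact (derivWithin_Ici_eqOn_deriv hy).symm

theorem contDiffOn_two_Ici_of_tendsto_deriv_deriv {B : ℝ → ℝ} (hB1 : ContDiffOn ℝ 1 B (Ici a))
    (hB2 : ContDiffOn ℝ 2 B (Ioi a)) (hlim : Tendsto (deriv (deriv B)) (𝓝[>] a) (𝓝 M)) :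
    ContDiffOn ℝ 2 B (Ici a) ∧ derivWithin (derivWithin B (Ici a)) (Ici a) a = M := by
  have hB'1 : ContDiffOn ℝ 1 (derivWithin B (Ici a)) (Ioi a) :=
    (hB2.deriv_of_isOpen isOpen_Ioi le_rfl).congr fun _ hx => derivWithin_Ici_eqOn_deriv hx
  have hderiv : EqOn (deriv (derivWithin B (Ici a))) (deriv (deriv B)) (Ioi a) := fun x hx =>
    (eventuallyEq_of_mem (Ioi_mem_nhds hx) derivWithin_Ici_eqOn_deriv).deriv_eq
  obtain ⟨hC1, hval⟩ := contDiffOn_one_Ici_of_tendsto_deriv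
    (hB1.continuousOn_derivWithin (uniqueDiffOn_Ici a) le_rfl) hB'1
    (hlim.congr' (eventuallyEq_nhdsWithin_of_eqOn hderiv).symm)
  refine ⟨?_, hval⟩
  rw [show (2 : WithTop ℕ∞) = 1 + 1 from rfl, contDiffOn_succ_iff_derivWithin (uniqueDiffOn_Ici a)]
  exact ⟨hB1.differentiableOn one_ne_zero, by simp, hC1⟩

end OneSided

section Ray

variable {E : Type*} [NormedAddCommGroup E] [NormedSpace ℝ E]

theorem fderiv_apply_eq_of_eq_on_ray {g : E → ℝ} {φ : ℝ → ℝ} {v : E} {a c s : ℝ} (hs : 0 < s)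
    (hg : DifferentiableAt ℝ g (s • v)) (hφ : DifferentiableAt ℝ φ (a * s))
    (hray : ∀ u, 0 < u → g (u • v) = c * φ (a * u)) :
    fderiv ℝ g (s • v) v = c * a * deriv φ (a * s) := by
  have hline : HasDerivAt (fun u : ℝ => g (u • v)) (fderiv ℝ g (s • v) v) s := by
    exact hg.hasFDerivAt.comp_hasDerivAt s (by simpa using (hasDerivAt_id s).smul_const v)
  have hscaled : HasDerivAt (fun u => c * φ (a * u)) (c * (deriv φ (a * s) * a)) s :=
    (hφ.hasDerivAt.comp s (by simpa using (hasDerivAt_id s).const_mul a)).const_mul c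
  have heq : (fun u => c * φ (a * u)) =ᶠ[𝓝 s] fun u => g (u • v) := by
    filter_upwards [Ioi_mem_nhds hs] with u hu
    exact (hray u hu).symm
  rw [(hline.congr_of_eventuallyEq heq).unique hscaled]
  ring

variable {H : E → ℝ} {B : ℝ → ℝ} {v : E}

theorem contDiffAt_comp_of_ne_zero (hH : ContDiffOn ℝ 2 H {x | x ≠ 0})
    (hHpos : ∀ ξ : E, ξ ≠ 0 → 0 < H ξ) (hB2 : ContDiffOn ℝ 2 B (Ioi 0)) {x : E} (hx : x ≠ 0) :
    ContDiffAt ℝ 2 (fun y => B (H y)) x :=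
  (hB2.comp hH fun _ hy => hHpos _ hy).contDiffAt (isOpen_ne.mem_nhds hx)

theorem fderiv_comp_apply_smul (hH : ContDiffOn ℝ 2 H {x | x ≠ 0})
    (hhom : ∀ t : ℝ, 0 < t → ∀ ξ : E, ξ ≠ 0 → H (t • ξ) = t * H ξ)
    (hHpos : ∀ ξ : E, ξ ≠ 0 → 0 < H ξ) (hB2 : ContDiffOn ℝ 2 B (Ioi 0))
    (hv : v ≠ 0) {s : ℝ} (hs : 0 < s) :
    fderiv ℝ (fun y => B (H y)) (s • v) v = H v * deriv B (H v * s) := by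
  have hBd : DifferentiableAt ℝ B (H v * s) :=
    (hB2.contDiffAt (Ioi_mem_nhds (mul_pos (hHpos v hv) hs))).differentiableAt two_ne_zero
  simpa only [one_mul] using fderiv_apply_eq_of_eq_on_ray (c := 1) hs
    ((contDiffAt_comp_of_ne_zero hH hHpos hB2 (smul_ne_zero hs.ne' hv)).differentiableAt
      two_ne_zero) hBd fun u hu => by rw [hhom u hu v hv, one_mul, mul_comm]

theorem fderiv_fderiv_comp_apply_smul (hH : ContDiffOn ℝ 2 H {x | x ≠ 0})
    (hhom : ∀ t : ℝ, 0 < t → ∀ ξ : E, ξ ≠ 0 → H (t • ξ) = t * H ξ)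
    (hHpos : ∀ ξ : E, ξ ≠ 0 → 0 < H ξ) (hB2 : ContDiffOn ℝ 2 B (Ioi 0))
    (hv : v ≠ 0) {s : ℝ} (hs : 0 < s) :
    fderiv ℝ (fun x => fderiv ℝ (fun y => B (H y)) x v) (s • v) v
      = H v ^ 2 * deriv (deriv B) (H v * s) := by
  have hG : DifferentiableAt ℝ (fun x => fderiv ℝ (fun y => B (H y)) x v) (s • v) :=
    (((contDiffAt_comp_of_ne_zero hH hHpos hB2 (smul_ne_zero hs.ne' hv)).fderiv_right
      (m := 1) le_rfl).clm_apply contDiffAt_const).differentiableAt one_ne_zero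
  have hB'd : DifferentiableAt ℝ (deriv B) (H v * s) :=
    ((hB2.deriv_of_isOpen isOpen_Ioi (m := 1) le_rfl).contDiffAt
      (Ioi_mem_nhds (mul_pos (hHpos v hv) hs))).differentiableAt one_ne_zero
  rw [fderiv_apply_eq_of_eq_on_ray hs hG hB'd fun u hu =>
    fderiv_comp_apply_smul hH hhom hHpos hB2 hv hu, sq]

theorem tendsto_deriv_deriv_nhdsGT_zero (hH : ContDiffOn ℝ 2 H {x | x ≠ 0})
    (hhom : ∀ t : ℝ, 0 < t → ∀ ξ : E, ξ ≠ 0 → H (t • ξ) = t * H ξ)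
    (hHpos : ∀ ξ : E, ξ ≠ 0 → 0 < H ξ) (hB2 : ContDiffOn ℝ 2 B (Ioi 0))
    {L : ℝ} (hv : v ≠ 0)
    (hlim : Tendsto (fun ξ => fderiv ℝ (fun x => fderiv ℝ (fun y => B (H y)) x v) ξ v)
      (𝓝[{x : E | x ≠ 0}] 0) (𝓝 L)) :
    Tendsto (deriv (deriv B)) (𝓝[>] 0) (𝓝 ((H v ^ 2)⁻¹ * L)) := by
  have hray : Tendsto (fun t : ℝ => t • v) (𝓝[>] 0) (𝓝[{x : E | x ≠ 0}] 0) := by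
    refine tendsto_nhdsWithin_iff.2 ⟨?_, ?_⟩
    · exact ((continuous_id.smul continuous_const : Continuous fun t : ℝ => t • v).tendsto' 0 0
        (zero_smul ℝ v)).mono_left nhdsWithin_le_nhds
    · filter_upwards [self_mem_nhdsWithin] with t ht
      exact smul_ne_zero (ne_of_gt ht) hv
  have hsq : H v ^ 2 ≠ 0 := pow_ne_zero 2 (hHpos v hv).ne'
  rw [← tendsto_comp_mul_left_nhdsGT_zero_iff (hHpos v hv)]
  refine ((hlim.comp hray).const_mul (H v ^ 2)⁻¹).congr' ?_
  filter_upwards [self_mem_nhdsWithin] with t ht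
  simp only [Function.comp_apply, fderiv_fderiv_comp_apply_smul hH hhom hHpos hB2 hv ht,
    inv_mul_cancel_left₀ hsq]

end Ray

theorem B_C2_at_zero_general
    (n : ℕ) (H : EuclideanSpace ℝ (Fin (n + 1)) → ℝ) (B : ℝ → ℝ) (L : ℝ)
    (hH : ContDiffOn ℝ 2 H {x : EuclideanSpace ℝ (Fin (n + 1)) | x ≠ 0})
    (hhom : ∀ t : ℝ, 0 < t → ∀ ξ : EuclideanSpace ℝ (Fin (n + 1)), ξ ≠ 0 →
      H (t • ξ) = t * H ξ)
    (hHpos : ∀ ξ : EuclideanSpace ℝ (Fin (n + 1)), ξ ≠ 0 → 0 < H ξ)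
    (hB1 : ContDiffOn ℝ 1 B (Set.Ici 0))
    (hB2 : ContDiffOn ℝ 2 B (Set.Ioi 0))
    (hlim : Filter.Tendsto
      (fun ξ : EuclideanSpace ℝ (Fin (n + 1)) =>
        fderiv ℝ (fun x => fderiv ℝ (fun y => B (H y)) x
            (EuclideanSpace.single 0 1)) ξ (EuclideanSpace.single 0 1))
      (nhdsWithin 0 {x : EuclideanSpace ℝ (Fin (n + 1)) | x ≠ 0}) (nhds L)) :
    ContDiffOn ℝ 2 B (Set.Ici 0) ∧
      derivWithin (derivWithin B (Set.Ici 0)) (Set.Ici 0) 0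
        = (H (EuclideanSpace.single 0 1)) ^ (-2 : ℤ) * L := by
  have he : (EuclideanSpace.single 0 1 : EuclideanSpace ℝ (Fin (n + 1))) ≠ 0 := by simp
  rw [zpow_neg, zpow_ofNat]
  exact contDiffOn_two_Ici_of_tendsto_deriv_deriv hB1 hB2
    (tendsto_deriv_deriv_nhdsGT_zero hH hhom hHpos hB2 he hlim)

/-- If the pure second derivative `∂²(B∘H)/∂ξ₁²` extends continuously to `0` with
limit `L`, then `B` is `C²` up to `0` and `B''(0) = H(e₁)⁻² L`. -/
theorem B_C2_at_zero
    (n : ℕ) (H : EuclideanSpace ℝ (Fin (n + 1)) → ℝ) (B : ℝ → ℝ) (L : ℝ)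
    (hH : ContDiffOn ℝ 2 H {x : EuclideanSpace ℝ (Fin (n + 1)) | x ≠ 0})
    (hhom : ∀ t : ℝ, 0 < t → ∀ ξ : EuclideanSpace ℝ (Fin (n + 1)), ξ ≠ 0 →
      H (t • ξ) = t * H ξ)
    (hHpos : ∀ ξ : EuclideanSpace ℝ (Fin (n + 1)), ξ ≠ 0 → 0 < H ξ)
    (hB1 : ContDiffOn ℝ 1 B (Set.Ici 0))
    (hB2 : ContDiffOn ℝ 2 B (Set.Ioi 0))
    (hB0 : B 0 = 0) (hB'0 : derivWithin B (Set.Ici 0) 0 = 0)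
    (hlim : Filter.Tendsto
      (fun ξ : EuclideanSpace ℝ (Fin (n + 1)) =>
        fderiv ℝ (fun x => fderiv ℝ (fun y => B (H y)) x
            (EuclideanSpace.single 0 1)) ξ (EuclideanSpace.single 0 1))
      (nhdsWithin 0 {x : EuclideanSpace ℝ (Fin (n + 1)) | x ≠ 0}) (nhds L)) :
    ContDiffOn ℝ 2 B (Set.Ici 0) ∧
      derivWithin (derivWithin B (Set.Ici 0)) (Set.Ici 0) 0
        = (H (EuclideanSpace.single 0 1)) ^ (-2 : ℤ) * L :=
  B_C2_at_zero_general n H B L hH hhom hHpos hB1 hB2 hlim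
end
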